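/- Let n, m be nonnegative integers and a ∉ ℤ. Then 2F1(-n, a; m+1; z) = (m!·(m+1-a)_n/(m+n)!) · z^{-m} · 2F1(-m-n, a-m; a-m-n; 1-z), valid for z ≠ 0. -/

import Mathlib

open Finset

noncomputable def poch (x : ℂ) (k : ℕ) : ℂ := (ascPochhammer ℂ k).eval x

/-- Terminating Gauss hypergeometric series `2F1(-n, b; c; z)` as a finite sum. -/
noncomputable def hyp (n : ℕ) (b c : ℂ) (z : ℂ) : ℂ :=
  ∑ k ∈ Finset.range (n + 1),
    poch (-(n : ℂ)) k * poch b k / (poch c k * (Nat.factorial k : ℂ)) * z ^ k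

/-!
Multiply by `z ^ m` and re-expand the polynomial `z ^ m * F(z) = ∑ₖ tₖ z ^ (m + k)` around `z = 1`,
writing `z = 1 - (1 - z)`. Once the binomial coefficients are written through Pochhammer symbols,
the coefficient of `(1 - z) ^ j` is the Chu–Vandermonde sum
`∑ₖ (-1)ᵏ C(n, k) (a)ₖ (c + k)ₙ₋ₖ = (c - a)ₙ` with `c = m - j + 1`, and the reflection
`(1 - x - n)ₙ = (-1)ⁿ (x)ₙ` turns `(m - j + 1 - a)ₙ` into the coefficient of the right-hand series.
-/

open Polynomial Nat

lemma poch_add (x : ℂ) (j k : ℕ) : poch x (j + k) = poch x j * poch (x + j) k := by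
  simp [poch, ← ascPochhammer_mul, eval_comp]

lemma poch_neg (x : ℂ) (k : ℕ) : poch (-x) k = (-1) ^ k * poch (x - k + 1) k := by
  rw [poch, ascPochhammer_eval_neg_eq_descPochhammer, descPochhammer_eval_eq_ascPochhammer, poch]

lemma poch_neg_natCast (n k : ℕ) : poch (-n) k = (-1) ^ k * k ! * n.choose k := by
  rw [poch, ascPochhammer_eval_neg_eq_descPochhammer, descPochhammer_eval_eq_descFactorial,
    descFactorial_eq_factorial_mul_choose, cast_mul, mul_assoc]

lemma factorial_mul_poch_natCast_add_one (m k : ℕ) : (m ! : ℂ) * poch (m + 1) k = (m + k)! := by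
  simpa [poch] using factorial_mul_ascPochhammer ℂ m k

lemma poch_ne_zero {x : ℂ} (hx : ∀ j : ℤ, x ≠ j) (k : ℕ) : poch x k ≠ 0 := by
  rw [poch, Ne, ascPochhammer_eval_eq_zero_iff]
  rintro ⟨i, -, hi⟩
  exact hx (-i) (by push_cast; rw [hi, neg_neg])

/-- Chu–Vandermonde, from the descending-factorial version at `r = -x`, `s = c + n - 1`. -/
lemma poch_sub_eq_sum (n : ℕ) (x c : ℂ) :
    poch (c - x) n =
      ∑ k ∈ range (n + 1), (-1) ^ k * n.choose k * poch x k * poch (c + k) (n - k) := by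
  have h := Ring.descPochhammer_smeval_add (r := -x) (s := c + n - 1) n (Commute.all _ _)
  simp only [descPochhammer_smeval_eq_ascPochhammer, ascPochhammer_smeval_eq_eval, ← poch.eq_1,
    sum_antidiagonal_eq_sum_range_succ (fun i l => (n.choose i : ℂ) *
      (poch (-x - i + 1) i * poch (c + n - 1 - l + 1) l))] at h
  convert h using 1
  · congr 1; ring
  refine sum_congr rfl fun k hk => ?_
  have hx : poch (-x - k + 1) k = (-1) ^ k * poch x k := by
    rw [show -x - k + 1 = -(x + k - 1) by ring, poch_neg, show x + k - 1 - k + 1 = x by ring]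
  rw [hx, Nat.cast_sub (Nat.lt_succ_iff.mp (mem_range.mp hk)),
    show c + n - 1 - (n - k) + 1 = c + k by ring]
  ring

/-- The Pochhammer factor stands for `(N - j)! / (p - j)!`; for `p < j` it vanishes, like the
binomial coefficient. -/
lemma choose_mul_factorial_mul_factorial_eq_poch {p N j : ℕ} (hp : p ≤ N) (hj : j ≤ N) :
    (p.choose j * j ! * (N - j)! : ℂ) = poch (p - j + 1) (N - p) * p ! := by
  rcases le_or_gt j p with hjp | hpj
  · have hfac := factorial_mul_poch_natCast_add_one (p - j) (N - p)
    rw [show p - j + (N - p) = N - j by omega, Nat.cast_sub hjp] at hfac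
    rw [← hfac, ← Nat.choose_mul_factorial_mul_factorial hjp]
    push_cast [Nat.cast_sub hjp]
    ring
  · have hzero : poch (p - j + 1) (N - p) = 0 := by
      rw [poch, ascPochhammer_eval_eq_zero_iff]
      exact ⟨j - p - 1, by omega, by rw [Nat.sub_sub, Nat.cast_sub (by omega)]; push_cast; ring⟩
    rw [Nat.choose_eq_zero_of_lt hpj, hzero]
    simp

lemma poch_one_sub_sub_mul_poch (b : ℂ) (n j : ℕ) :
    poch (1 - b - j - n) n * poch b j = poch (1 - b - n) n * poch (b + n) j := by
  have hrefl (x : ℂ) : poch (1 - x - n) n = (-1) ^ n * poch x n := by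
    rw [show 1 - x - n = -(x + n - 1) by ring, poch_neg, show x + n - 1 - n + 1 = x by ring]
  rw [show 1 - b - j - n = 1 - (b + j) - n by ring, hrefl, hrefl]
  have hjn := poch_add b j n
  rw [add_comm j n, poch_add] at hjn
  linear_combination -(-1) ^ n * hjn

noncomputable def hypCoeff (n : ℕ) (b c : ℂ) (k : ℕ) : ℂ :=
  poch (-(n : ℂ)) k * poch b k / (poch c k * (k ! : ℂ))

lemma sum_hypCoeff_mul_choose {n m j : ℕ} (hj : j ≤ m + n) {a : ℂ}
    (hpoch : poch (a - m - n) j ≠ 0) :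
    ∑ k ∈ range (n + 1), hypCoeff n a (m + 1) k * ((-1) ^ j * (m + k).choose j) =
      m ! * poch (m + 1 - a) n / (m + n)! * hypCoeff (m + n) (a - m) (a - m - n) j := by
  have hfac (i : ℕ) : (i ! : ℂ) ≠ 0 := Nat.cast_ne_zero.mpr i.factorial_ne_zero
  set L : ℂ := (-1) ^ j * m ! / (j ! * (m + n - j)!)
  have hterm : ∀ k ∈ range (n + 1), hypCoeff n a (m + 1) k * ((-1) ^ j * (m + k).choose j) =
      L * ((-1) ^ k * n.choose k * poch a k * poch (m - j + 1 + k) (n - k)) := by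
    intro k hk
    have hkn : k ≤ n := Nat.lt_succ_iff.mp (mem_range.mp hk)
    have hchoose := choose_mul_factorial_mul_factorial_eq_poch (p := m + k) (by omega) hj
    have hpm := factorial_mul_poch_natCast_add_one m k
    have hpm0 : poch (m + 1) k ≠ 0 := right_ne_zero_of_mul (hpm ▸ hfac (m + k))
    rw [Nat.add_sub_add_left] at hchoose
    push_cast at hchoose
    simp only [hypCoeff, L, poch_neg_natCast]
    rw [show (m : ℂ) - j + 1 + k = m + k - j + 1 by ring]
    field_simp [hfac]
    linear_combination (n.choose k * poch a k) * hchoose -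
      (n.choose k * poch a k * poch (m + k - j + 1) (n - k)) * hpm
  rw [sum_congr rfl hterm, ← mul_sum, ← poch_sub_eq_sum]
  have hshift :
      poch (m - j + 1 - a) n * poch (a - m - n) j = poch (m + 1 - a) n * poch (a - m) j := by
    convert poch_one_sub_sub_mul_poch (a - m - n) n j using 3 <;> ring
  have hchoose : ((m + n).choose j * j ! * (m + n - j)! : ℂ) = (m + n)! := by
    exact_mod_cast Nat.choose_mul_factorial_mul_factorial hj
  simp only [hypCoeff, L, poch_neg_natCast]
  field_simp [hfac]
  linear_combination ((m + n)! : ℂ) * hshift - (poch (m + 1 - a) n * poch (a - m) j) * hchoose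

lemma pow_eq_sum_choose_mul_one_sub_pow {R : Type*} [CommRing R] (x : R) {e N : ℕ} (he : e ≤ N) :
    x ^ e = ∑ j ∈ range (N + 1), (-1) ^ j * e.choose j * (1 - x) ^ j := by
  have hext : ∀ j ∈ range (N + 1), j ∉ range (e + 1) → (-1) ^ j * e.choose j * (1 - x) ^ j = 0 :=
    fun j _ hj => by rw [Nat.choose_eq_zero_of_lt (by simpa using hj)]; simp
  rw [← sum_subset (range_subset_range.mpr (by omega)) hext, show x = -(1 - x) + 1 by ring, add_pow]
  refine sum_congr rfl fun j _ => ?_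
  rw [one_pow, neg_pow, show -(1 - x) + 1 = x by ring]
  ring

lemma sum_mul_pow_eq_sum_mul_one_sub_pow {R : Type*} [CommRing R] (s : Finset ℕ) (c : ℕ → R)
    {e : ℕ → ℕ} {N : ℕ} (he : ∀ k ∈ s, e k ≤ N) (x : R) :
    ∑ k ∈ s, c k * x ^ e k =
      ∑ j ∈ range (N + 1), (∑ k ∈ s, c k * ((-1) ^ j * (e k).choose j)) * (1 - x) ^ j := by
  simp_rw [sum_mul]
  rw [sum_comm]
  refine sum_congr rfl fun k hk => ?_
  rw [pow_eq_sum_choose_mul_one_sub_pow x (he k hk), mul_sum]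
  exact sum_congr rfl fun j _ => by ring

theorem terminating_extra_transform_two (n m : ℕ) (a : ℂ) (ha : ∀ j : ℤ, a ≠ (j : ℂ))
    (z : ℂ) (hz0 : z ≠ 0) :
    hyp n a ((m : ℂ) + 1) z =
      (Nat.factorial m : ℂ) * poch ((m : ℂ) + 1 - a) n / (Nat.factorial (m + n) : ℂ) *
        z ^ (-(m : ℤ)) * hyp (m + n) (a - m) (a - m - n) (1 - z) := by
  have hpoch (j : ℕ) : poch (a - m - n) j ≠ 0 :=
    poch_ne_zero (fun i h => ha (i + m + n) (by push_cast; linear_combination h)) j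
  have hreexpand : z ^ m * hyp n a (m + 1) z =
      m ! * poch (m + 1 - a) n / (m + n)! * hyp (m + n) (a - m) (a - m - n) (1 - z) :=
    calc z ^ m * hyp n a (m + 1) z
        = ∑ k ∈ range (n + 1), hypCoeff n a (m + 1) k * z ^ (m + k) := by
          rw [hyp, mul_sum]
          exact sum_congr rfl fun k _ => by rw [pow_add, hypCoeff]; ring
      _ = ∑ j ∈ range (m + n + 1),
            (∑ k ∈ range (n + 1), hypCoeff n a (m + 1) k * ((-1) ^ j * (m + k).choose j)) *
              (1 - z) ^ j :=
          sum_mul_pow_eq_sum_mul_one_sub_pow _ _ (fun k hk => by simp at hk; omega) z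
      _ = _ := by
          rw [hyp, mul_sum]
          refine sum_congr rfl fun j hj => ?_
          rw [sum_hypCoeff_mul_choose (by simpa [Nat.lt_succ_iff] using hj) (hpoch j), mul_assoc,
            hypCoeff]
  rw [zpow_neg, zpow_natCast, ← inv_mul_cancel_left₀ (pow_ne_zero m hz0) (hyp n a _ z), hreexpand]
  ring
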